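/- arXiv:2211.01073 — 11 statements merged into one kernel-verified Lean document; each statement's English description precedes it below -/
import Mathlib

section
/- A two-dimensional algebra over a field, equipped with a nondegenerate invariant symmetric bilinear form (i.e., h(x∙y, z) = h(x, y∙z) for all x, y, z), is commutative. -/
/-- A two-dimensional metrized algebra is commutative. -/
theorem two_dimensional_metrized_algebra_commutative
    {F A : Type*} [Field F] [AddCommGroup A] [Module F A]
    [FiniteDimensional F A] (hdim : Module.finrank F A = 2)
    (mul : A →ₗ[F] A →ₗ[F] A)
    (h : A →ₗ[F] A →ₗ[F] F)
    (hsymm : ∀ x y : A, h x y = h y x)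
    (hnd : ∀ x : A, (∀ y : A, h x y = 0) → x = 0)
    (hinv : ∀ x y z : A, h (mul x y) z = h x (mul y z)) :
    ∀ x y : A, mul x y = mul y x := by
  have h1 : ∀ x y : A, h (mul x y) x = h (mul y x) x := by
    intro x y; rw [hinv x y x, hsymm]
  intro x y
  set b := Module.finBasisOfFinrankEq F A hdim with hb
  have hx := b.sum_repr x
  have hy := b.sum_repr y
  have goal0 : ∀ z, h (mul x y - mul y x) z = 0 := by
    intro z
    have hz := b.sum_repr z
    rw [← hx, ← hy, ← hz]
    have e1 : h (mul (b 0) (b 1)) (b 0) = h (mul (b 1) (b 0)) (b 0) := h1 (b 0) (b 1)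
    have e2 : h (mul (b 1) (b 0)) (b 1) = h (mul (b 0) (b 1)) (b 1) := h1 (b 1) (b 0)
    simp only [Fin.sum_univ_two, map_add, map_smul, LinearMap.add_apply,
      LinearMap.smul_apply, map_sub, LinearMap.sub_apply, smul_eq_mul]
    linear_combination
      ((b.repr x 0 * b.repr y 1 - b.repr x 1 * b.repr y 0) * b.repr z 0) * e1 +
      ((b.repr x 1 * b.repr y 0 - b.repr x 0 * b.repr y 1) * b.repr z 1) * e2
  have := hnd _ goal0
  exact sub_eq_zero.mp this
end

section
/- An algebra (A, ∙) over a field of characteristic ≠ 2 is flexible if and only if its curvature is self-adjoint (i.e., ρ(x,y) = ρ̄(x,y) for all x, y) and for every x the operator A(x) = L(x) − R(x) is a derivation of the underlying commutative algebra with product x∘y = x∙y + y∙x. -/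
/-- An algebra over a field of characteristic ≠ 2 is flexible iff it has self-adjoint
curvature and `A(x) = L(x) - R(x)` is a derivation of the underlying commutative algebra
`x ∘ y = x∙y + y∙x` for every `x`. -/
theorem flexible_iff_selfAdjointCurvature_and_deriv
    {F A : Type*} [Field F] [AddCommGroup A] [Module F A]
    (hchar : (2 : F) ≠ 0)
    (mul : A →ₗ[F] A →ₗ[F] A) :
    (∀ x y : A, mul (mul x y) x = mul x (mul y x)) ↔
      ((∀ x y z : A,
          -(mul (mul x y) z - mul x (mul y z)) + (mul (mul y x) z - mul y (mul x z))
            = -(mul (mul z x) y - mul z (mul x y)) + (mul (mul z y) x - mul z (mul y x))) ∧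
       (∀ x y z : A,
          mul x (mul y z + mul z y) - mul (mul y z + mul z y) x
            = (mul (mul x y - mul y x) z + mul z (mul x y - mul y x))
              + (mul y (mul x z - mul z x) + mul (mul x z - mul z x) y))) := by
  constructor
  · intro h
    -- linearized flexibility
    have hlin : ∀ x y z : A,
        mul (mul x y) z + mul (mul z y) x = mul x (mul y z) + mul z (mul y x) := by
      intro x y z
      have key := h (x + z) y
      simp only [map_add, LinearMap.add_apply, h x y, h z y] at key
      have := key
      abel_nf at this ⊢
      linear_combination (norm := module) this
    simp only [map_add, map_sub, LinearMap.add_apply, LinearMap.sub_apply]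
    constructor
    · intro x y z
      have h1 := hlin x y z
      have h2 := hlin y x z
      linear_combination (norm := module) h2 - h1
    · intro x y z
      have h1 := hlin x y z
      have h2 := hlin y x z
      have h3 := hlin x z y
      linear_combination (norm := module) h2 - h1 - h3
  · rintro ⟨-, h2⟩ x y
    have key := h2 x y x
    simp only [map_add, map_sub, LinearMap.add_apply, LinearMap.sub_apply, sub_self,
      map_zero, LinearMap.zero_apply] at key
    have h2smul : (2 : F) • (mul (mul x y) x) = (2 : F) • (mul x (mul y x)) := by
      rw [two_smul, two_smul]
      linear_combination (norm := module) -key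
    exact smul_right_injective A hchar h2smul
end

section
/- Every antiflexible algebra is Lie-admissible: if (x∙y)∙z − x∙(y∙z) = (z∙y)∙x − z∙(y∙x) for all x, y, z, then the commutator [x, y] = x∙y − y∙x satisfies the Jacobi identity. -/
/-- Every antiflexible algebra is Lie-admissible: the commutator satisfies the
Jacobi identity. -/
theorem antiflexible_lieAdmissible
    {F A : Type*} [Field F] [AddCommGroup A] [Module F A]
    (mul : A →ₗ[F] A →ₗ[F] A)
    (hanti : ∀ x y z : A,
      mul (mul x y) z - mul x (mul y z) = mul (mul z y) x - mul z (mul y x)) :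
    ∀ x y z : A,
      (mul (mul x y - mul y x) z - mul z (mul x y - mul y x))
      + (mul (mul y z - mul z y) x - mul x (mul y z - mul z y))
      + (mul (mul z x - mul x z) y - mul y (mul z x - mul x z)) = 0 := by
  intro x y z
  have h1 := hanti x y z
  have h2 := hanti y z x
  have h3 := hanti z x y
  simp only [map_sub, LinearMap.sub_apply] at *
  linear_combination (norm := abel) h1 + h2 + h3
end

section
/- In a metrized algebra (A, ∙, h), for linearly independent x, y spanning an h-nondegenerate subspace, the quantity h([x,x,y], y)/(h(x,x)h(y,y) − h(x,y)²) equals (h(x∙x, y∙y) − h(x∙y, y∙x))/(h(x,x)h(y,y) − h(x,y)²), and this quantity depends only on the span of x and y (it is invariant under change of basis of the two-dimensional subspace). -/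
/-- In a metrized algebra, for `x, y` spanning an `h`-nondegenerate plane, the sectional
nonassociativity `(h(x∙x,y∙y) - h(x∙y,y∙x)) / (h(x,x)h(y,y) - h(x,y)²)` equals
`h([x,x,y],y)` divided by the same Gram determinant, and it depends only on the span
of `x` and `y`. -/
theorem sectional_nonassociativity_well_defined
    {F A : Type*} [Field F] [AddCommGroup A] [Module F A]
    (mul : A →ₗ[F] A →ₗ[F] A)
    (h : A →ₗ[F] A →ₗ[F] F)
    (hsymm : ∀ x y : A, h x y = h y x)
    (hnd : ∀ x : A, (∀ y : A, h x y = 0) → x = 0)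
    (hinv : ∀ x y z : A, h (mul x y) z = h x (mul y z))
    (sec : A → A → F)
    (hsec : ∀ x y : A, sec x y =
      (h (mul x x) (mul y y) - h (mul x y) (mul y x)) / (h x x * h y y - h x y ^ 2))
    (x y : A) (hxy : h x x * h y y - h x y ^ 2 ≠ 0) :
    sec x y = h (mul (mul x x) y - mul x (mul x y)) y / (h x x * h y y - h x y ^ 2) ∧
    ∀ a b c d : F, a * d - b * c ≠ 0 →
      sec (a • x + b • y) (c • x + d • y) = sec x y := by
  constructor
  · have h1 : h (mul (mul x x) y) y = h (mul x x) (mul y y) := hinv _ _ _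
    have h2 : h (mul x (mul x y)) y = h (mul x y) (mul y x) :=
      (hsymm _ _).trans ((hinv y x (mul x y)).symm.trans (hsymm _ _))
    rw [hsec, map_sub, LinearMap.sub_apply, h1, h2]
  · intro a b c d habcd
    set u := a • x + b • y with hu
    set v := c • x + d • y with hv
    have s1 : h (mul x y) (mul x x) = h (mul x x) (mul x y) := hsymm _ _
    have s2 : h (mul y x) (mul x x) = h (mul x x) (mul y x) := hsymm _ _
    have s3 : h (mul y y) (mul x x) = h (mul x x) (mul y y) := hsymm _ _
    have s4 : h (mul y x) (mul x y) = h (mul x y) (mul y x) := hsymm _ _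
    have s5 : h (mul y y) (mul x y) = h (mul x y) (mul y y) := hsymm _ _
    have s6 : h (mul y y) (mul y x) = h (mul y x) (mul y y) := hsymm _ _
    have s7 : h y x = h x y := hsymm _ _
    have hnum : h (mul u u) (mul v v) - h (mul u v) (mul v u) =
        (a * d - b * c) ^ 2 *
          (h (mul x x) (mul y y) - h (mul x y) (mul y x)) := by
      simp only [hu, hv, map_add, map_smul, LinearMap.add_apply, LinearMap.smul_apply,
        smul_eq_mul]
      rw [s1, s2, s3, s4, s5, s6]
      ring
    have hden : h u u * h v v - h u v ^ 2 =
        (a * d - b * c) ^ 2 * (h x x * h y y - h x y ^ 2) := by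
      simp only [hu, hv, map_add, map_smul, LinearMap.add_apply, LinearMap.smul_apply,
        smul_eq_mul]
      rw [s7]
      ring
    have hpow : (a * d - b * c) ^ 2 ≠ 0 := pow_ne_zero _ habcd
    rw [hsec, hsec, hnum, hden, mul_div_mul_left _ _ hpow]
end

section
/- A metrized alternative algebra has identically vanishing sectional nonassociativity: if (A, ∙, h) is metrized and satisfies [x,x,y] = 0 and [x,y,y] = 0 for all x, y, then h(x∙x, y∙y) = h(x∙y, y∙x) for all x, y. -/
/-- A metrized alternative algebra has identically vanishing sectional nonassociativity:
`h(x∙x, y∙y) = h(x∙y, y∙x)` for all `x, y`. -/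
theorem metrized_alternative_vanishing_sectional_nonassociativity
    {F A : Type*} [Field F] [AddCommGroup A] [Module F A]
    (mul : A →ₗ[F] A →ₗ[F] A)
    (h : A →ₗ[F] A →ₗ[F] F)
    (hsymm : ∀ x y : A, h x y = h y x)
    (hnd : ∀ x : A, (∀ y : A, h x y = 0) → x = 0)
    (hinv : ∀ x y z : A, h (mul x y) z = h x (mul y z))
    (halt1 : ∀ x y : A, mul (mul x x) y = mul x (mul x y))
    (halt2 : ∀ x y : A, mul (mul x y) y = mul x (mul y y)) :
    ∀ x y : A, h (mul x x) (mul y y) = h (mul x y) (mul y x) := by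
  intro x y
  calc h (mul x x) (mul y y) = h (mul (mul y y) x) x := by
        rw [hsymm (mul x x), ← hinv]
    _ = h (mul y (mul y x)) x := by rw [halt1]
    _ = h (mul x y) (mul y x) := by rw [hsymm, ← hinv, hsymm]
end

section
/- For a Euclidean metrized algebra (A, ∙, h): 4·sec_∙(x, y) = sec_∘(x, y) + sec_{[·,·]}(x, y) for all linearly independent x, y, where ∘ is the symmetrized product and [·,·] the commutator. Consequently 4·sec_∙(x, y) ≥ sec_∘(x, y), with equality iff x∙y = y∙x. -/
/-- Sectional nonassociativity of a metrized algebra with respect to a product `m`. -/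
noncomputable def secNA {A : Type*} [AddCommGroup A] [Module ℝ A]
    (h : A →ₗ[ℝ] A →ₗ[ℝ] ℝ) (m : A →ₗ[ℝ] A →ₗ[ℝ] A) (x y : A) : ℝ :=
  (h (m x x) (m y y) - h (m x y) (m y x)) / (h x x * h y y - h x y ^ 2)

/-!
Expanding the numerators bilinearly, with `s = x∙y + y∙x` and `c = x∙y - y∙x` one has
`h(s, s) - h(c, c) = 4 h(x∙y, y∙x)` by symmetry of `h`, which gives the identity
`4 sec_∙ = sec_∘ + sec_[,]`. Since the commutator is alternating,
`sec_[,](x, y) = h(c, c) / (h(x,x) h(y,y) - h(x,y)²)`, and by positivity of `h` this is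
nonnegative and vanishes exactly when `c = 0`.
-/

section SymmetricForm

variable {A : Type*} [AddCommGroup A] [Module ℝ A] (h : A →ₗ[ℝ] A →ₗ[ℝ] ℝ)

theorem self_eq_zero_iff_of_pos (hpos : ∀ x : A, x ≠ 0 → 0 < h x x) {c : A} :
    h c c = 0 ↔ c = 0 := by
  refine ⟨fun hc => ?_, fun hc => by simp [hc]⟩
  by_contra hc0
  exact (hpos c hc0).ne' hc

theorem self_nonneg_of_pos (hpos : ∀ x : A, x ≠ 0 → 0 < h x x) (c : A) : 0 ≤ h c c := by
  by_cases hc : c = 0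
  · simp [hc]
  · exact (hpos c hc).le

/-- `h x x • y - h x y • x` is, up to the factor `h x x`, the component of `y` orthogonal to `x`. -/
theorem self_smul_sub_smul_eq_mul_gram_det (hsymm : ∀ x y : A, h x y = h y x) (x y : A) :
    h (h x x • y - h x y • x) (h x x • y - h x y • x) =
      h x x * (h x x * h y y - h x y ^ 2) := by
  simp only [map_sub, map_smul, LinearMap.sub_apply, LinearMap.smul_apply, smul_eq_mul,
    hsymm y x]
  ring

theorem gram_det_pos (hsymm : ∀ x y : A, h x y = h y x) (hpos : ∀ x : A, x ≠ 0 → 0 < h x x)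
    {x y : A} (hxy : LinearIndependent ℝ ![x, y]) : 0 < h x x * h y y - h x y ^ 2 := by
  have hxx : 0 < h x x := hpos x (by simpa using hxy.ne_zero 0)
  have hz : h x x • y - h x y • x ≠ 0 := by
    intro hz
    have hcomb : (-h x y) • x + h x x • y = 0 := by rw [← hz]; module
    exact hxx.ne' (LinearIndependent.pair_iff.mp hxy _ _ hcomb).2
  have := hpos _ hz
  rw [self_smul_sub_smul_eq_mul_gram_det h hsymm] at this
  exact pos_of_mul_pos_right this hxx.le

theorem secNA_of_alternating {m : A →ₗ[ℝ] A →ₗ[ℝ] A} (hm : ∀ x, m x x = 0) (x y : A) :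
    secNA h m x y = h (m x y) (m x y) / (h x x * h y y - h x y ^ 2) := by
  have hanti : m y x = -m x y := by
    have := hm (x + y)
    simp only [map_add, LinearMap.add_apply, hm, zero_add, add_zero] at this
    exact eq_neg_of_add_eq_zero_left this
  simp [secNA, hm, hanti]

theorem four_mul_secNA_eq_secNA_add_secNA (hsymm : ∀ x y : A, h x y = h y x)
    (mul sym br : A →ₗ[ℝ] A →ₗ[ℝ] A)
    (hsym : ∀ x y : A, sym x y = mul x y + mul y x)
    (hbr : ∀ x y : A, br x y = mul x y - mul y x) (x y : A) :
    4 * secNA h mul x y = secNA h sym x y + secNA h br x y := by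
  simp only [secNA, ← add_div, hsym, hbr, map_add, map_sub, LinearMap.add_apply,
    LinearMap.sub_apply, hsymm (mul y x) (mul x y)]
  ring

end SymmetricForm

theorem four_sec_eq_sec_sym_add_sec_br_general
    {A : Type*} [AddCommGroup A] [Module ℝ A]
    (mul : A →ₗ[ℝ] A →ₗ[ℝ] A)
    (h : A →ₗ[ℝ] A →ₗ[ℝ] ℝ)
    (hsymm : ∀ x y : A, h x y = h y x)
    (hpos : ∀ x : A, x ≠ 0 → 0 < h x x)
    (sym br : A →ₗ[ℝ] A →ₗ[ℝ] A)
    (hsym : ∀ x y : A, sym x y = mul x y + mul y x)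
    (hbr : ∀ x y : A, br x y = mul x y - mul y x) :
    ∀ x y : A, LinearIndependent ℝ ![x, y] →
      (4 * secNA h mul x y = secNA h sym x y + secNA h br x y) ∧
      secNA h sym x y ≤ 4 * secNA h mul x y ∧
      (4 * secNA h mul x y = secNA h sym x y ↔ mul x y = mul y x) := by
  intro x y hxy
  have hsplit := four_mul_secNA_eq_secNA_add_secNA h hsymm mul sym br hsym hbr x y
  have hgram := gram_det_pos h hsymm hpos hxy
  have hsec_br : secNA h br x y = h (br x y) (br x y) / (h x x * h y y - h x y ^ 2) :=
    secNA_of_alternating h (fun x => by rw [hbr, sub_self]) x y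
  have hbr_nonneg : 0 ≤ secNA h br x y :=
    hsec_br ▸ div_nonneg (self_nonneg_of_pos h hpos _) hgram.le
  refine ⟨hsplit, by linarith, ?_⟩
  calc 4 * secNA h mul x y = secNA h sym x y ↔ secNA h br x y = 0 := by
        constructor <;> intro <;> linarith
    _ ↔ br x y = 0 := by
        rw [hsec_br, div_eq_zero_iff, self_eq_zero_iff_of_pos h hpos, or_iff_left hgram.ne']
    _ ↔ mul x y = mul y x := by rw [hbr, sub_eq_zero]

/-- For a Euclidean metrized algebra, `4·sec_∙ = sec_∘ + sec_[,]`, hence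
`4·sec_∙(x,y) ≥ sec_∘(x,y)` with equality iff `x` and `y` commute. -/
theorem four_sec_eq_sec_sym_add_sec_br
    {A : Type*} [AddCommGroup A] [Module ℝ A]
    (mul : A →ₗ[ℝ] A →ₗ[ℝ] A)
    (h : A →ₗ[ℝ] A →ₗ[ℝ] ℝ)
    (hsymm : ∀ x y : A, h x y = h y x)
    (hpos : ∀ x : A, x ≠ 0 → 0 < h x x)
    (hinv : ∀ x y z : A, h (mul x y) z = h x (mul y z))
    (sym br : A →ₗ[ℝ] A →ₗ[ℝ] A)
    (hsym : ∀ x y : A, sym x y = mul x y + mul y x)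
    (hbr : ∀ x y : A, br x y = mul x y - mul y x) :
    ∀ x y : A, LinearIndependent ℝ ![x, y] →
      (4 * secNA h mul x y = secNA h sym x y + secNA h br x y) ∧
      secNA h sym x y ≤ 4 * secNA h mul x y ∧
      (4 * secNA h mul x y = secNA h sym x y ↔ mul x y = mul y x) :=
  four_sec_eq_sec_sym_add_sec_br_general mul h hsymm hpos sym br hsym hbr
end

section
/- Let (A, ∙, h) be a Euclidean metrized commutative algebra with an h-orthogonal decomposition A = A₁ ⊕ A₂ into ideals. If both (A₁, ∙, h) and (A₂, ∙, h) have nonnegative (resp. nonpositive) sectional nonassociativity, then so does (A, ∙, h). -/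
/-!
Ideals `A₁`, `A₂` with `A₁ ⊓ A₂ = ⊥` annihilate each other, since `A₁ ∙ A₂ ⊆ A₁ ∩ A₂`. Hence the
product is computed componentwise, and with the orthogonality of the summands the numerator
`h(x∙x, y∙y) - |x∙y|²` of the sectional nonassociativity is additive over the decomposition.
-/

section

variable {R M N P : Type*} [CommSemiring R] [AddCommMonoid M] [AddCommMonoid N]
  [AddCommMonoid P] [Module R M] [Module R N] [Module R P]

theorem LinearMap.map_add_add_of_cross_eq_zero (B : M →ₗ[R] N →ₗ[R] P) {u₁ u₂ : M} {v₁ v₂ : N}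
    (h₁₂ : B u₁ v₂ = 0) (h₂₁ : B u₂ v₁ = 0) :
    B (u₁ + u₂) (v₁ + v₂) = B u₁ v₁ + B u₂ v₂ := by
  simp only [map_add, LinearMap.add_apply, h₁₂, h₂₁, add_zero, zero_add]

end

section

variable {R A : Type*} [CommRing R] [AddCommGroup A] [Module R A]

/-- The numerator of the sectional nonassociativity `sec(x, y)`. -/
def sectionalDefect (mul : A →ₗ[R] A →ₗ[R] A) (h : A →ₗ[R] A →ₗ[R] R) (x y : A) : R :=
  h (mul x x) (mul y y) - h (mul x y) (mul x y)

variable {mul : A →ₗ[R] A →ₗ[R] A} {A₁ A₂ : Submodule R A}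

theorem mul_eq_zero_of_mem_of_mem (hcomm : ∀ x y : A, mul x y = mul y x)
    (hdisj : Disjoint A₁ A₂) (hid1 : ∀ a ∈ A₁, ∀ x : A, mul x a ∈ A₁)
    (hid2 : ∀ a ∈ A₂, ∀ x : A, mul x a ∈ A₂) {a b : A} (ha : a ∈ A₁) (hb : b ∈ A₂) :
    mul a b = 0 :=
  Submodule.disjoint_def.mp hdisj _ (hcomm a b ▸ hid1 a ha b) (hid2 b hb a)

theorem sectionalDefect_add_of_mem {h : A →ₗ[R] A →ₗ[R] R}
    (hcomm : ∀ x y : A, mul x y = mul y x) (hsymm : ∀ x y : A, h x y = h y x)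
    (hdisj : Disjoint A₁ A₂) (hid1 : ∀ a ∈ A₁, ∀ x : A, mul x a ∈ A₁)
    (hid2 : ∀ a ∈ A₂, ∀ x : A, mul x a ∈ A₂) (horth : ∀ a ∈ A₁, ∀ b ∈ A₂, h a b = 0)
    {x₁ y₁ x₂ y₂ : A} (hx₁ : x₁ ∈ A₁) (hy₁ : y₁ ∈ A₁) (hx₂ : x₂ ∈ A₂) (hy₂ : y₂ ∈ A₂) :
    sectionalDefect mul h (x₁ + x₂) (y₁ + y₂) =
      sectionalDefect mul h x₁ y₁ + sectionalDefect mul h x₂ y₂ := by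
  have hmul : ∀ {u₁ u₂ v₁ v₂ : A}, u₁ ∈ A₁ → u₂ ∈ A₂ → v₁ ∈ A₁ → v₂ ∈ A₂ →
      mul (u₁ + u₂) (v₁ + v₂) = mul u₁ v₁ + mul u₂ v₂ := fun hu₁ hu₂ hv₁ hv₂ =>
    mul.map_add_add_of_cross_eq_zero (mul_eq_zero_of_mem_of_mem hcomm hdisj hid1 hid2 hu₁ hv₂)
      (hcomm _ _ ▸ mul_eq_zero_of_mem_of_mem hcomm hdisj hid1 hid2 hv₁ hu₂)
  have hform : ∀ {u₁ u₂ v₁ v₂ : A}, u₁ ∈ A₁ → u₂ ∈ A₂ → v₁ ∈ A₁ → v₂ ∈ A₂ →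
      h (u₁ + u₂) (v₁ + v₂) = h u₁ v₁ + h u₂ v₂ := fun hu₁ hu₂ hv₁ hv₂ =>
    h.map_add_add_of_cross_eq_zero (horth _ hu₁ _ hv₂) (hsymm _ _ ▸ horth _ hv₁ _ hu₂)
  unfold sectionalDefect
  rw [hmul hx₁ hx₂ hx₁ hx₂, hmul hy₁ hy₂ hy₁ hy₂, hmul hx₁ hx₂ hy₁ hy₂,
    hform (hid1 x₁ hx₁ x₁) (hid2 x₂ hx₂ x₂) (hid1 y₁ hy₁ y₁) (hid2 y₂ hy₂ y₂),
    hform (hid1 y₁ hy₁ x₁) (hid2 y₂ hy₂ x₂) (hid1 y₁ hy₁ x₁) (hid2 y₂ hy₂ x₂)]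
  ring

theorem exists_sectionalDefect_eq_add {h : A →ₗ[R] A →ₗ[R] R}
    (hcomm : ∀ x y : A, mul x y = mul y x) (hsymm : ∀ x y : A, h x y = h y x)
    (hcompl : IsCompl A₁ A₂) (hid1 : ∀ a ∈ A₁, ∀ x : A, mul x a ∈ A₁)
    (hid2 : ∀ a ∈ A₂, ∀ x : A, mul x a ∈ A₂) (horth : ∀ a ∈ A₁, ∀ b ∈ A₂, h a b = 0)
    (x y : A) : ∃ x₁ ∈ A₁, ∃ y₁ ∈ A₁, ∃ x₂ ∈ A₂, ∃ y₂ ∈ A₂,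
      sectionalDefect mul h x y = sectionalDefect mul h x₁ y₁ + sectionalDefect mul h x₂ y₂ := by
  obtain ⟨x₁, x₂, hx₁, hx₂, rfl⟩ := Submodule.codisjoint_iff_exists_add_eq.mp hcompl.codisjoint x
  obtain ⟨y₁, y₂, hy₁, hy₂, rfl⟩ := Submodule.codisjoint_iff_exists_add_eq.mp hcompl.codisjoint y
  exact ⟨x₁, hx₁, y₁, hy₁, x₂, hx₂, y₂, hy₂,
    sectionalDefect_add_of_mem hcomm hsymm hcompl.disjoint hid1 hid2 horth hx₁ hy₁ hx₂ hy₂⟩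

end

theorem sect_direct_sum_general
    {A : Type*} [AddCommGroup A] [Module ℝ A]
    (mul : A →ₗ[ℝ] A →ₗ[ℝ] A)
    (hcomm : ∀ x y : A, mul x y = mul y x)
    (h : A →ₗ[ℝ] A →ₗ[ℝ] ℝ)
    (hsymm : ∀ x y : A, h x y = h y x)
    (A₁ A₂ : Submodule ℝ A)
    (hcompl : IsCompl A₁ A₂)
    (hid1 : ∀ a ∈ A₁, ∀ x : A, mul x a ∈ A₁)
    (hid2 : ∀ a ∈ A₂, ∀ x : A, mul x a ∈ A₂)
    (horth : ∀ a ∈ A₁, ∀ b ∈ A₂, h a b = 0) :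
    ((∀ x ∈ A₁, ∀ y ∈ A₁, h (mul x y) (mul x y) ≤ h (mul x x) (mul y y)) →
     (∀ x ∈ A₂, ∀ y ∈ A₂, h (mul x y) (mul x y) ≤ h (mul x x) (mul y y)) →
     ∀ x y : A, h (mul x y) (mul x y) ≤ h (mul x x) (mul y y)) ∧
    ((∀ x ∈ A₁, ∀ y ∈ A₁, h (mul x x) (mul y y) ≤ h (mul x y) (mul x y)) →
     (∀ x ∈ A₂, ∀ y ∈ A₂, h (mul x x) (mul y y) ≤ h (mul x y) (mul x y)) →
     ∀ x y : A, h (mul x x) (mul y y) ≤ h (mul x y) (mul x y)) := by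
  have hsplit := exists_sectionalDefect_eq_add hcomm hsymm hcompl hid1 hid2 horth
  constructor
  · intro H₁ H₂ x y
    obtain ⟨x₁, hx₁, y₁, hy₁, x₂, hx₂, y₂, hy₂, hxy⟩ := hsplit x y
    suffices 0 ≤ sectionalDefect mul h x y from sub_nonneg.mp this
    rw [hxy]
    exact add_nonneg (sub_nonneg.mpr (H₁ x₁ hx₁ y₁ hy₁)) (sub_nonneg.mpr (H₂ x₂ hx₂ y₂ hy₂))
  · intro H₁ H₂ x y
    obtain ⟨x₁, hx₁, y₁, hy₁, x₂, hx₂, y₂, hy₂, hxy⟩ := hsplit x y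
    suffices sectionalDefect mul h x y ≤ 0 from sub_nonpos.mp this
    rw [hxy]
    exact add_nonpos (sub_nonpos.mpr (H₁ x₁ hx₁ y₁ hy₁)) (sub_nonpos.mpr (H₂ x₂ hx₂ y₂ hy₂))

/-- For a Euclidean metrized commutative algebra decomposing as an orthogonal direct sum
of ideals, nonnegative (resp. nonpositive) sectional nonassociativity of both summands
implies nonnegative (resp. nonpositive) sectional nonassociativity of the whole algebra.
(For a commutative algebra, nonnegative sectional nonassociativity is equivalent to
`h(x∙x, y∙y) ≥ |x∙y|²` for all `x, y`, and similarly for nonpositive.) -/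
theorem sect_direct_sum
    {A : Type*} [AddCommGroup A] [Module ℝ A]
    (mul : A →ₗ[ℝ] A →ₗ[ℝ] A)
    (hcomm : ∀ x y : A, mul x y = mul y x)
    (h : A →ₗ[ℝ] A →ₗ[ℝ] ℝ)
    (hsymm : ∀ x y : A, h x y = h y x)
    (hpos : ∀ x : A, x ≠ 0 → 0 < h x x)
    (hinv : ∀ x y z : A, h (mul x y) z = h x (mul y z))
    (A₁ A₂ : Submodule ℝ A)
    (hcompl : IsCompl A₁ A₂)
    (hid1 : ∀ a ∈ A₁, ∀ x : A, mul x a ∈ A₁)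
    (hid2 : ∀ a ∈ A₂, ∀ x : A, mul x a ∈ A₂)
    (horth : ∀ a ∈ A₁, ∀ b ∈ A₂, h a b = 0) :
    ((∀ x ∈ A₁, ∀ y ∈ A₁, h (mul x y) (mul x y) ≤ h (mul x x) (mul y y)) →
     (∀ x ∈ A₂, ∀ y ∈ A₂, h (mul x y) (mul x y) ≤ h (mul x x) (mul y y)) →
     ∀ x y : A, h (mul x y) (mul x y) ≤ h (mul x x) (mul y y)) ∧
    ((∀ x ∈ A₁, ∀ y ∈ A₁, h (mul x x) (mul y y) ≤ h (mul x y) (mul x y)) →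
     (∀ x ∈ A₂, ∀ y ∈ A₂, h (mul x x) (mul y y) ≤ h (mul x y) (mul x y)) →
     ∀ x y : A, h (mul x x) (mul y y) ≤ h (mul x y) (mul x y)) :=
  sect_direct_sum_general mul hcomm h hsymm A₁ A₂ hcompl hid1 hid2 horth
end

section
/- Let (A₁, ∙₁, h₁) and (A₂, ∙₂, h₂) be Euclidean metrized commutative algebras, and form the tensor product algebra with product (a⊗b)∙(a'⊗b') = (a∙₁a')⊗(b∙₂b') and metric h = h₁⊗h₂. If a₁, ā₁ ∈ A₁ and a₂, ā₂ ∈ A₂ are such that sec(a₁, ā₁) ≥ 0 and sec(a₂, ā₂) ≥ 0, then sec(a₁⊗a₂, ā₁⊗ā₂) ≥ 0 in the tensor product algebra (whenever the relevant pairs are linearly independent). -/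
open scoped TensorProduct

/-- Strict Cauchy–Schwarz for a positive definite symmetric bilinear form. -/
lemma cs_strict {A : Type*} [AddCommGroup A] [Module ℝ A]
    (h : A →ₗ[ℝ] A →ₗ[ℝ] ℝ)
    (hsymm : ∀ x y : A, h x y = h y x)
    (hpos : ∀ x : A, x ≠ 0 → 0 < h x x)
    (a b : A) (hind : LinearIndependent ℝ ![a, b]) :
    h a b ^ 2 < h a a * h b b := by
  obtain ⟨hb, hab⟩ := linearIndependent_fin2.mp hind
  have hbb : 0 < h b b := hpos b hb
  set t : ℝ := h a b / h b b with ht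
  have hc : a - t • b ≠ 0 := by
    intro hc0
    exact hab t (sub_eq_zero.mp hc0).symm
  have hcc : 0 < h (a - t • b) (a - t • b) := hpos _ hc
  simp only [map_sub, map_smul, smul_eq_mul, LinearMap.sub_apply, LinearMap.smul_apply] at hcc
  rw [hsymm b a] at hcc
  have ht' : t * h b b = h a b := div_mul_cancel₀ _ hbb.ne'
  nlinarith [hcc, ht', hbb]

/-- For the tensor product of Euclidean metrized commutative algebras, nonnegative
sectional nonassociativity on pairs in each factor implies nonnegative sectional
nonassociativity on the corresponding pair of decomposable tensors. -/
theorem sect_tensor_product_nonneg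
    {A₁ A₂ : Type*} [AddCommGroup A₁] [Module ℝ A₁] [AddCommGroup A₂] [Module ℝ A₂]
    (mul₁ : A₁ →ₗ[ℝ] A₁ →ₗ[ℝ] A₁) (mul₂ : A₂ →ₗ[ℝ] A₂ →ₗ[ℝ] A₂)
    (hcomm₁ : ∀ x y : A₁, mul₁ x y = mul₁ y x)
    (hcomm₂ : ∀ x y : A₂, mul₂ x y = mul₂ y x)
    (h₁ : A₁ →ₗ[ℝ] A₁ →ₗ[ℝ] ℝ) (h₂ : A₂ →ₗ[ℝ] A₂ →ₗ[ℝ] ℝ)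
    (hsymm₁ : ∀ x y : A₁, h₁ x y = h₁ y x) (hsymm₂ : ∀ x y : A₂, h₂ x y = h₂ y x)
    (hpos₁ : ∀ x : A₁, x ≠ 0 → 0 < h₁ x x) (hpos₂ : ∀ x : A₂, x ≠ 0 → 0 < h₂ x x)
    (hinv₁ : ∀ x y z : A₁, h₁ (mul₁ x y) z = h₁ x (mul₁ y z))
    (hinv₂ : ∀ x y z : A₂, h₂ (mul₂ x y) z = h₂ x (mul₂ y z))
    (mulT : (A₁ ⊗[ℝ] A₂) →ₗ[ℝ] (A₁ ⊗[ℝ] A₂) →ₗ[ℝ] (A₁ ⊗[ℝ] A₂))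
    (hmulT : ∀ (a a' : A₁) (b b' : A₂),
      mulT (a ⊗ₜ[ℝ] b) (a' ⊗ₜ[ℝ] b') = (mul₁ a a') ⊗ₜ[ℝ] (mul₂ b b'))
    (hT : (A₁ ⊗[ℝ] A₂) →ₗ[ℝ] (A₁ ⊗[ℝ] A₂) →ₗ[ℝ] ℝ)
    (hhT : ∀ (a a' : A₁) (b b' : A₂),
      hT (a ⊗ₜ[ℝ] b) (a' ⊗ₜ[ℝ] b') = h₁ a a' * h₂ b b')
    (a₁ b₁ : A₁) (a₂ b₂ : A₂)
    (hind₁ : LinearIndependent ℝ ![a₁, b₁])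
    (hind₂ : LinearIndependent ℝ ![a₂, b₂])
    (hindT : LinearIndependent ℝ ![a₁ ⊗ₜ[ℝ] a₂, b₁ ⊗ₜ[ℝ] b₂])
    (hs₁ : 0 ≤ secNA h₁ mul₁ a₁ b₁)
    (hs₂ : 0 ≤ secNA h₂ mul₂ a₂ b₂) :
    0 ≤ secNA hT mulT (a₁ ⊗ₜ[ℝ] a₂) (b₁ ⊗ₜ[ℝ] b₂) := by
  have hnn₁ : ∀ x : A₁, 0 ≤ h₁ x x := by
    intro x
    by_cases hx : x = 0
    · simp [hx]
    · exact (hpos₁ x hx).le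
  have hnn₂ : ∀ x : A₂, 0 ≤ h₂ x x := by
    intro x
    by_cases hx : x = 0
    · simp [hx]
    · exact (hpos₂ x hx).le
  have cs₁ := cs_strict h₁ hsymm₁ hpos₁ a₁ b₁ hind₁
  have cs₂ := cs_strict h₂ hsymm₂ hpos₂ a₂ b₂ hind₂
  have hD₁ : 0 < h₁ a₁ a₁ * h₁ b₁ b₁ - h₁ a₁ b₁ ^ 2 := by linarith
  have hD₂ : 0 < h₂ a₂ a₂ * h₂ b₂ b₂ - h₂ a₂ b₂ ^ 2 := by linarith
  have hP₁ : 0 ≤ h₁ (mul₁ a₁ a₁) (mul₁ b₁ b₁) - h₁ (mul₁ a₁ b₁) (mul₁ b₁ a₁) := by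
    have := mul_nonneg hs₁ hD₁.le
    rwa [secNA, div_mul_cancel₀ _ hD₁.ne'] at this
  have hP₂ : 0 ≤ h₂ (mul₂ a₂ a₂) (mul₂ b₂ b₂) - h₂ (mul₂ a₂ b₂) (mul₂ b₂ a₂) := by
    have := mul_nonneg hs₂ hD₂.le
    rwa [secNA, div_mul_cancel₀ _ hD₂.ne'] at this
  rw [hcomm₁ b₁ a₁] at hP₁
  rw [hcomm₂ b₂ a₂] at hP₂
  have hp₁ : 0 ≤ h₁ (mul₁ a₁ b₁) (mul₁ a₁ b₁) := hnn₁ _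
  have hp₂ : 0 ≤ h₂ (mul₂ a₂ b₂) (mul₂ a₂ b₂) := hnn₂ _
  rw [secNA, hmulT, hmulT, hmulT, hmulT, hhT, hhT, hhT, hhT, hhT,
    hcomm₁ b₁ a₁, hcomm₂ b₂ a₂]
  apply div_nonneg
  · nlinarith [hP₁, hP₂, hp₁, hp₂]
  · nlinarith [cs₁, cs₂, sq_nonneg (h₁ a₁ b₁), sq_nonneg (h₂ a₂ b₂),
      hnn₁ a₁, hnn₁ b₁, hnn₂ a₂, hnn₂ b₂]
end

section
/- Böttcher–Wenzel reduction: let V be a real inner product space of matrices (or any algebra with bilinear bracket [·,·]) with norm |·|, and suppose C := sup{|[x,y]|²/(|x|²|y|²) : x, y ≠ 0} is finite. Then |[x,y]|² ≤ C(|x|²|y|² − ⟨x,y⟩²) for all x, y. (Proof via p = |y|x − |x|y, q = |y|x + |x|y, using [p,q] = 2|x||y|[x,y].) -/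
open scoped RealInnerProductSpace

/-- Böttcher–Wenzel reduction: if the supremum `C` of `‖[x,y]‖²/(‖x‖²‖y‖²)` over nonzero
`x, y` is finite, then `‖[x,y]‖² ≤ C(‖x‖²‖y‖² - ⟪x,y⟫²)` for all `x, y`. -/
theorem bw_reduction
    {V : Type*} [NormedAddCommGroup V] [InnerProductSpace ℝ V]
    [FiniteDimensional ℝ V] [Nontrivial V]
    (br : V →ₗ[ℝ] V →ₗ[ℝ] V)
    (hanti : ∀ x : V, br x x = 0)
    (S : Set ℝ)
    (hS : S = {r | ∃ x y : V, x ≠ 0 ∧ y ≠ 0 ∧ r = ‖br x y‖ ^ 2 / (‖x‖ ^ 2 * ‖y‖ ^ 2)})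
    (hbdd : BddAbove S) :
    ∀ x y : V, ‖br x y‖ ^ 2 ≤ sSup S * (‖x‖ ^ 2 * ‖y‖ ^ 2 - ⟪x, y⟫ ^ 2) := by
  set C := sSup S with hC
  have hCnn : 0 ≤ C := by
    obtain ⟨v, hv⟩ := exists_ne (0 : V)
    have h0 : (0:ℝ) ∈ S := by
      rw [hS]; exact ⟨v, v, hv, hv, by simp [hanti]⟩
    exact le_csSup hbdd h0
  have key : ∀ a b : V, ‖br a b‖ ^ 2 ≤ C * (‖a‖ ^ 2 * ‖b‖ ^ 2) := by
    intro a b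
    rcases eq_or_ne a 0 with rfl | ha
    · simp
    rcases eq_or_ne b 0 with rfl | hb
    · simp
    have hmem : ‖br a b‖ ^ 2 / (‖a‖ ^ 2 * ‖b‖ ^ 2) ∈ S := by
      rw [hS]; exact ⟨a, b, ha, hb, rfl⟩
    have h := le_csSup hbdd hmem
    have ha' : 0 < ‖a‖ := norm_pos_iff.mpr ha
    have hb' : 0 < ‖b‖ := norm_pos_iff.mpr hb
    have hpos : 0 < ‖a‖ ^ 2 * ‖b‖ ^ 2 := by positivity
    rw [div_le_iff₀ hpos] at h
    linarith
  have hanti2 : ∀ a b : V, br b a = - br a b := by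
    intro a b
    have h := hanti (a + b)
    simp only [map_add, LinearMap.add_apply, hanti] at h
    have h' : br a b + br b a = 0 := by
      have := h
      abel_nf at this ⊢
      simpa using this
    exact eq_neg_of_add_eq_zero_right h'
  intro x y
  rcases eq_or_ne x 0 with rfl | hx
  · simp
  rcases eq_or_ne y 0 with rfl | hy
  · simp
  set a := ‖y‖ with hadef
  set b := ‖x‖ with hbdef
  have hap : 0 < a := norm_pos_iff.mpr hy
  have hbp : 0 < b := norm_pos_iff.mpr hx
  set p := a • x - b • y with hp
  set q := a • x + b • y with hq
  have hbr : br p q = (2 * a * b) • br x y := by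
    simp only [hp, hq, map_add, map_sub, map_smul, LinearMap.add_apply,
      LinearMap.sub_apply, LinearMap.smul_apply, hanti, hanti2 x y,
      smul_zero, smul_neg, smul_smul]
    module
  have hnp : ‖p‖ ^ 2 = a ^ 2 * ‖x‖ ^ 2 - 2 * (a * b) * ⟪x, y⟫ + b ^ 2 * ‖y‖ ^ 2 := by
    rw [hp, norm_sub_sq_real]
    rw [norm_smul, norm_smul, real_inner_smul_left, real_inner_smul_right]
    simp [Real.norm_of_nonneg hap.le, Real.norm_of_nonneg hbp.le]
    ring
  have hnq : ‖q‖ ^ 2 = a ^ 2 * ‖x‖ ^ 2 + 2 * (a * b) * ⟪x, y⟫ + b ^ 2 * ‖y‖ ^ 2 := by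
    rw [hq, norm_add_sq_real]
    rw [norm_smul, norm_smul, real_inner_smul_left, real_inner_smul_right]
    simp [Real.norm_of_nonneg hap.le, Real.norm_of_nonneg hbp.le]
    ring
  have hkey := key p q
  rw [hbr, norm_smul] at hkey
  have h2ab : ‖(2 : ℝ) * a * b‖ = 2 * a * b := by
    rw [Real.norm_of_nonneg]; positivity
  rw [h2ab, mul_pow] at hkey
  have hprod : ‖p‖ ^ 2 * ‖q‖ ^ 2 =
      4 * a ^ 2 * b ^ 2 * (‖x‖ ^ 2 * ‖y‖ ^ 2 - ⟪x, y⟫ ^ 2) := by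
    rw [hnp, hnq, hadef, hbdef]; ring
  rw [hprod] at hkey
  have habpos : 0 < 4 * a ^ 2 * b ^ 2 := by positivity
  have : (2 * a * b) ^ 2 * ‖br x y‖ ^ 2 =
      4 * a ^ 2 * b ^ 2 * ‖br x y‖ ^ 2 := by ring
  rw [this] at hkey
  have := (mul_le_mul_iff_right₀ habpos).mp (by linarith : 4 * a ^ 2 * b ^ 2 * ‖br x y‖ ^ 2 ≤ 4 * a ^ 2 * b ^ 2 * (C * (‖x‖ ^ 2 * ‖y‖ ^ 2 - ⟪x, y⟫ ^ 2)))
  linarith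
end

section
/- Let (A, ∙, h) be a Euclidean metrized commutative algebra of dimension ≥ 2 and let e be a nonzero idempotent (e∙e = e). Then for all x with x ∧ e ≠ 0, 4·sec(e, x) ≤ 1/h(e,e), with equality if and only if the component of x orthogonal to e is an eigenvector of L(e) with eigenvalue 1/2. Moreover, if sec(e, x) ≥ 0 for all x in all planes containing e, then every eigenvalue of L(e) on the orthogonal complement of e lies in [0, 1], and if sec ≤ 0 on all such planes, every such eigenvalue lies outside (0, 1). -/
set_option maxHeartbeats 1000000 in
/-- For a nonzero idempotent `e` in a Euclidean metrized commutative algebra of dimension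
at least 2: `4·sec(e,x) ≤ 1/h(e,e)`, with equality iff the component of `x` orthogonal to
`e` is an eigenvector of `L(e)` with eigenvalue `1/2`; if `sec ≥ 0` (resp. `≤ 0`) on all
planes through `e`, every eigenvalue of `L(e)` on the orthocomplement of `e` lies in
`[0,1]` (resp. outside `(0,1)`). -/
theorem idempotent_sect_bounds
    {A : Type*} [AddCommGroup A] [Module ℝ A] [FiniteDimensional ℝ A]
    (hdim : 2 ≤ Module.finrank ℝ A)
    (mul : A →ₗ[ℝ] A →ₗ[ℝ] A)
    (hcomm : ∀ x y : A, mul x y = mul y x)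
    (h : A →ₗ[ℝ] A →ₗ[ℝ] ℝ)
    (hsymm : ∀ x y : A, h x y = h y x)
    (hpos : ∀ x : A, x ≠ 0 → 0 < h x x)
    (hinv : ∀ x y z : A, h (mul x y) z = h x (mul y z))
    (e : A) (he : e ≠ 0) (hidem : mul e e = e) :
    (∀ x : A, LinearIndependent ℝ ![e, x] →
      4 * secNA h mul e x ≤ 1 / h e e ∧
      (4 * secNA h mul e x = 1 / h e e ↔
        mul e (x - (h e x / h e e) • e) = (1 / 2 : ℝ) • (x - (h e x / h e e) • e))) ∧
    ((∀ x : A, LinearIndependent ℝ ![e, x] → 0 ≤ secNA h mul e x) →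
      ∀ (μ : ℝ) (x : A), x ≠ 0 → h e x = 0 → mul e x = μ • x → 0 ≤ μ ∧ μ ≤ 1) ∧
    ((∀ x : A, LinearIndependent ℝ ![e, x] → secNA h mul e x ≤ 0) →
      ∀ (μ : ℝ) (x : A), x ≠ 0 → h e x = 0 → mul e x = μ • x → μ ≤ 0 ∨ 1 ≤ μ) := by
  have hE : 0 < h e e := hpos e he
  have hnn : ∀ z : A, 0 ≤ h z z := by
    intro z
    rcases eq_or_ne z 0 with rfl | hz
    · simp
    · exact (hpos z hz).le
  -- eigenvector computation used in parts 2 and 3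
  have eig : ∀ (μ : ℝ) (x : A), x ≠ 0 → h e x = 0 → mul e x = μ • x →
      LinearIndependent ℝ ![e, x] ∧ secNA h mul e x = (μ - μ ^ 2) * h x x / (h e e * h x x) := by
    intro μ x hx0 hex hmu
    constructor
    · rw [LinearIndependent.pair_iff]
      intro s t hst
      have h1 : h e (s • e + t • x) = h e 0 := by rw [hst]
      simp only [map_add, map_smul, smul_eq_mul, hex, map_zero, mul_zero, add_zero] at h1
      have hs : s = 0 := (mul_eq_zero.mp h1).resolve_right hE.ne'
      subst hs
      simp only [zero_smul, zero_add] at hst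
      rcases smul_eq_zero.mp hst with ht | hx
      · exact ⟨rfl, ht⟩
      · exact absurd hx hx0
    · have h1 : h (mul e e) (mul x x) = μ * h x x := by
        rw [hidem, ← hinv e x x, hmu, map_smul]; simp
      have h2 : h (mul e x) (mul x e) = μ ^ 2 * h x x := by
        rw [hcomm x e, hmu, map_smul, map_smul]; simp; ring
      simp only [secNA, h1, h2, hex]
      ring_nf
  refine ⟨?_, ?_, ?_⟩
  · intro x hx
    set t : ℝ := h e x / h e e with ht
    set y : A := x - t • e with hy
    have hxe : h e x = t * h e e := by rw [ht]; field_simp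
    have hEy : h e y = 0 := by
      rw [hy]; simp only [map_sub, map_smul, smul_eq_mul]; rw [hxe]; ring
    have hyE : h y e = 0 := by rw [hsymm]; exact hEy
    have hyne : y ≠ 0 := by
      intro h0
      have hxeq : x = t • e := by rwa [hy, sub_eq_zero] at h0
      have := (LinearIndependent.pair_iff.mp hx t (-1)) (by rw [hxeq]; module)
      simpa using this.2
    have hY : 0 < h y y := hpos y hyne
    have hxeq : x = y + t • e := by rw [hy]; abel
    have h1 : h (mul e y) e = 0 := by
      rw [hcomm, hinv y e e, hidem, hyE]
    have h2 : h e (mul e y) = 0 := by rw [hsymm]; exact h1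
    have hmulex : mul e x = mul e y + t • e := by
      rw [hxeq]; simp only [map_add, map_smul, hidem]
    set a : ℝ := h (mul e y) y with ha
    set b : ℝ := h (mul e y) (mul e y) with hb
    have hay : h y (mul e y) = a := (hsymm _ _).symm ▸ rfl
    have hnum : h (mul e e) (mul x x) - h (mul e x) (mul x e) = a - b := by
      rw [hidem, ← hinv e x x, hcomm x e, hmulex, hxeq]
      simp only [map_add, map_smul, LinearMap.add_apply, LinearMap.smul_apply, smul_eq_mul,
        h1, h2, hEy, hyE]
      linear_combination hb
    have hden : h e e * h x x - h e x ^ 2 = h e e * h y y := by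
      rw [hxe, hxeq]
      simp only [map_add, map_smul, LinearMap.add_apply, LinearMap.smul_apply, smul_eq_mul,
        hEy, hyE]
      ring
    have hsec : secNA h mul e x = (a - b) / (h e e * h y y) := by
      rw [secNA, hnum, hden]
    have hD : 0 < h e e * h y y := mul_pos hE hY
    set z : A := mul e y - (1/2 : ℝ) • y with hz
    have hzz : h z z = b - a + h y y / 4 := by
      rw [hz]
      simp only [map_sub, map_smul, LinearMap.sub_apply, LinearMap.smul_apply, smul_eq_mul]
      rw [← ha, ← hb, hay]
      ring
    have hzpos : 0 ≤ h z z := hnn z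
    constructor
    · rw [hsec]
      rw [show 4 * ((a - b) / (h e e * h y y)) = (4 * (a - b)) / (h e e * h y y) by ring]
      rw [div_le_div_iff₀ hD hE]
      nlinarith [hzz, hzpos, hE, hY]
    · constructor
      · intro heq
        rw [hsec] at heq
        have h5 : (4 * (a - b)) / (h e e * h y y) = 1 / h e e := by
          rw [← heq]; ring
        rw [div_eq_div_iff hD.ne' hE.ne'] at h5
        have h6 : (4 * (a - b)) * h e e = h y y * h e e := by linarith
        have h7 : 4 * (a - b) = h y y := mul_right_cancel₀ hE.ne' h6
        have habY : b - a + h y y / 4 = 0 := by linarith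
        have hzz0 : h z z = 0 := by rw [hzz, habY]
        have hz0 : z = 0 := by
          by_contra hc
          exact absurd hzz0 (ne_of_gt (hpos z hc))
        rw [hz, sub_eq_zero] at hz0
        exact hz0
      · intro heq
        have ha2 : a = h y y / 2 := by
          rw [ha, heq]
          simp only [map_smul, LinearMap.smul_apply, smul_eq_mul]
          ring
        have hb2 : b = h y y / 4 := by
          rw [hb, heq]
          simp only [map_smul, LinearMap.smul_apply, smul_eq_mul]
          ring
        rw [hsec, ha2, hb2]
        field_simp
        ring
  · intro hsec μ x hx0 hex hmu
    obtain ⟨hli, hval⟩ := eig μ x hx0 hex hmu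
    have := hsec x hli
    rw [hval] at this
    have hX : 0 < h x x := hpos x hx0
    have hN : 0 ≤ (μ - μ ^ 2) * h x x := by
      have hD : 0 < h e e * h x x := mul_pos hE hX
      have h2 := mul_nonneg this hD.le
      rwa [div_mul_cancel₀ _ hD.ne'] at h2
    have hμ : 0 ≤ μ - μ ^ 2 := by
      by_contra hcon
      push_neg at hcon
      nlinarith [mul_pos (neg_pos.mpr hcon) hX]
    constructor
    · nlinarith [hμ, sq_nonneg μ]
    · nlinarith [hμ, sq_nonneg (μ - 1)]
  · intro hsec μ x hx0 hex hmu
    obtain ⟨hli, hval⟩ := eig μ x hx0 hex hmu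
    have := hsec x hli
    rw [hval] at this
    have hX : 0 < h x x := hpos x hx0
    have hN : (μ - μ ^ 2) * h x x ≤ 0 := by
      have hD : 0 < h e e * h x x := mul_pos hE hX
      have h2 := mul_nonpos_of_nonpos_of_nonneg this hD.le
      rwa [div_mul_cancel₀ _ hD.ne'] at h2
    have hμ : μ - μ ^ 2 ≤ 0 := by
      by_contra hcon
      push_neg at hcon
      nlinarith [mul_pos hcon hX]
    by_contra hc
    push_neg at hc
    obtain ⟨hc1, hc2⟩ := hc
    nlinarith [hμ, mul_pos hc1 (show (0:ℝ) < 1 - μ by linarith)]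
end

section
/- Let (A, ∙, h) be a Euclidean metrized commutative algebra and z ≠ 0 a square-zero element (z∙z = 0). Then for every y not in the span of z, sec(z, y) = −|z∙y|²/(|z|²|y|² − h(z,y)²) ≤ 0, with equality iff z∙y = 0. Consequently: (1) if A has positive sectional nonassociativity, it has no nonzero square-zero elements; (2) if A has nonnegative sectional nonassociativity and the map z ↦ L(z) is injective (e.g., A semisimple), then A has no nonzero square-zero elements. -/
private lemma gram_pos {A : Type*} [AddCommGroup A] [Module ℝ A]
    (h : A →ₗ[ℝ] A →ₗ[ℝ] ℝ)
    (hsymm : ∀ x y : A, h x y = h y x)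
    (hpos : ∀ x : A, x ≠ 0 → 0 < h x x)
    {z y : A} (hz : z ≠ 0) (hy : ¬ ∃ c : ℝ, y = c • z) :
    0 < h z z * h y y - h z y ^ 2 := by
  have hzz : 0 < h z z := hpos z hz
  set t : ℝ := h z y / h z z with ht
  have hw : y - t • z ≠ 0 := by
    intro hw0
    exact hy ⟨t, by rw [← sub_eq_zero]; exact hw0⟩
  have hww : 0 < h (y - t • z) (y - t • z) := hpos _ hw
  have hexp : h (y - t • z) (y - t • z)
      = h y y - 2 * t * h z y + t ^ 2 * h z z := by
    simp only [map_sub, map_smul, LinearMap.sub_apply, LinearMap.smul_apply,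
      smul_eq_mul]
    rw [hsymm y z]; ring
  rw [hexp, ht] at hww
  have : 0 < h z z * (h y y - 2 * (h z y / h z z) * h z y
      + (h z y / h z z) ^ 2 * h z z) := mul_pos hzz hww
  calc 0 < h z z * (h y y - 2 * (h z y / h z z) * h z y
      + (h z y / h z z) ^ 2 * h z z) := this
    _ = h z z * h y y - h z y ^ 2 := by field_simp; ring

private lemma h_nonneg {A : Type*} [AddCommGroup A] [Module ℝ A]
    (h : A →ₗ[ℝ] A →ₗ[ℝ] ℝ)
    (hpos : ∀ x : A, x ≠ 0 → 0 < h x x) (x : A) : 0 ≤ h x x := by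
  by_cases hx : x = 0
  · simp [hx]
  · exact (hpos x hx).le

/-- For a square-zero element `z ≠ 0` in a Euclidean metrized commutative algebra:
`sec(z,y) = -|z∙y|²/Gram ≤ 0` with equality iff `z∙y = 0`; consequently positive
sectional nonassociativity precludes nonzero square-zero elements, as does nonnegative
sectional nonassociativity together with injectivity of `z ↦ L(z)`. -/
theorem square_zero_sect_nonpos
    {A : Type*} [AddCommGroup A] [Module ℝ A] [FiniteDimensional ℝ A]
    (hdim : 2 ≤ Module.finrank ℝ A)
    (mul : A →ₗ[ℝ] A →ₗ[ℝ] A)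
    (hcomm : ∀ x y : A, mul x y = mul y x)
    (h : A →ₗ[ℝ] A →ₗ[ℝ] ℝ)
    (hsymm : ∀ x y : A, h x y = h y x)
    (hpos : ∀ x : A, x ≠ 0 → 0 < h x x)
    (hinv : ∀ x y z : A, h (mul x y) z = h x (mul y z)) :
    (∀ z : A, z ≠ 0 → mul z z = 0 →
      ∀ y : A, (¬ ∃ c : ℝ, y = c • z) →
        secNA h mul z y
            = -(h (mul z y) (mul z y)) / (h z z * h y y - h z y ^ 2) ∧
        secNA h mul z y ≤ 0 ∧
        (secNA h mul z y = 0 ↔ mul z y = 0)) ∧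
    ((∀ x y : A, LinearIndependent ℝ ![x, y] → 0 < secNA h mul x y) →
      ∀ z : A, mul z z = 0 → z = 0) ∧
    ((∀ x y : A, LinearIndependent ℝ ![x, y] → 0 ≤ secNA h mul x y) →
      Function.Injective (fun z : A => mul z) →
      ∀ z : A, mul z z = 0 → z = 0) := by
  -- main computation
  have main : ∀ z : A, z ≠ 0 → mul z z = 0 →
      ∀ y : A, (¬ ∃ c : ℝ, y = c • z) →
        secNA h mul z y
            = -(h (mul z y) (mul z y)) / (h z z * h y y - h z y ^ 2) ∧
        secNA h mul z y ≤ 0 ∧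
        (secNA h mul z y = 0 ↔ mul z y = 0) := by
    intro z hz hz2 y hy
    have hG : 0 < h z z * h y y - h z y ^ 2 := gram_pos h hsymm hpos hz hy
    have heq : secNA h mul z y
        = -(h (mul z y) (mul z y)) / (h z z * h y y - h z y ^ 2) := by
      rw [secNA, hz2, map_zero, LinearMap.zero_apply, hcomm y z, zero_sub,
        neg_div]
    have hnum : 0 ≤ h (mul z y) (mul z y) := h_nonneg h hpos _
    refine ⟨heq, ?_, ?_⟩
    · rw [heq]
      exact div_nonpos_of_nonpos_of_nonneg (neg_nonpos.mpr hnum) hG.le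
    · rw [heq]
      constructor
      · intro h0
        by_contra hzy
        have : h (mul z y) (mul z y) = 0 := by
          have := div_eq_zero_iff.mp h0
          rcases this with h1 | h1
          · linarith [neg_eq_zero.mp h1]
          · linarith
        exact absurd this (ne_of_gt (hpos _ hzy))
      · intro hzy
        rw [hzy]; simp
  refine ⟨main, ?_, ?_⟩
  -- existence of an independent companion
  have indep : ∀ z : A, z ≠ 0 → ∃ y : A, (¬ ∃ c : ℝ, y = c • z) ∧
      LinearIndependent ℝ ![z, y] := by
    intro z hz
    have hspan : Submodule.span ℝ {z} ≠ ⊤ := by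
      intro htop
      have h1 : Module.finrank ℝ (Submodule.span ℝ ({z} : Set A)) ≤ 1 :=
        le_of_eq (finrank_span_singleton hz)
      rw [htop] at h1
      have := finrank_top ℝ A
      omega
    obtain ⟨y, hy⟩ : ∃ y : A, y ∉ Submodule.span ℝ ({z} : Set A) := by
      by_contra hc
      push_neg at hc
      exact hspan (Submodule.eq_top_iff'.mpr hc)
    have hy' : ¬ ∃ c : ℝ, y = c • z := by
      rintro ⟨c, rfl⟩
      exact hy (Submodule.smul_mem _ c (Submodule.mem_span_singleton_self z))
    refine ⟨y, hy', ?_⟩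
    rw [LinearIndependent.pair_iff]
    intro s t hst
    have ht : t = 0 := by
      by_contra htne
      apply hy
      have : y = (-s / t) • z := by
        have h1 : t • y = (-s) • z := by
          rw [neg_smul, ← sub_eq_zero, sub_neg_eq_add, add_comm]; exact hst
        calc y = t⁻¹ • (t • y) := by
              rw [smul_smul, inv_mul_cancel₀ htne, one_smul]
          _ = t⁻¹ • ((-s) • z) := by rw [h1]
          _ = (-s / t) • z := by rw [smul_smul, div_eq_inv_mul]
      rw [this]
      exact Submodule.smul_mem _ _ (Submodule.mem_span_singleton_self z)
    subst ht
    simp only [zero_smul, add_zero, smul_eq_zero] at hst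
    exact ⟨hst.resolve_right hz, rfl⟩
  · intro hsec z hz2
    by_contra hz
    obtain ⟨y, hy, hli⟩ := indep z hz
    have h1 := (main z hz hz2 y hy).2.1
    have h2 := hsec z y hli
    linarith
  · intro hsec hinj z hz2
    by_contra hz
    have hL : mul z = 0 := by
      ext y
      by_cases hy : ∃ c : ℝ, y = c • z
      · obtain ⟨c, rfl⟩ := hy
        simp [map_smul, hz2]
      · obtain ⟨heq, hle, hiff⟩ := main z hz hz2 y hy
        have hli : LinearIndependent ℝ ![z, y] := by
          rw [LinearIndependent.pair_iff]
          intro s t hst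
          have ht : t = 0 := by
            by_contra htne
            apply hy
            refine ⟨-s / t, ?_⟩
            have h1 : t • y = (-s) • z := by
              rw [neg_smul, ← sub_eq_zero, sub_neg_eq_add, add_comm]; exact hst
            calc y = t⁻¹ • (t • y) := by
                  rw [smul_smul, inv_mul_cancel₀ htne, one_smul]
              _ = t⁻¹ • ((-s) • z) := by rw [h1]
              _ = (-s / t) • z := by rw [smul_smul, div_eq_inv_mul]
          subst ht
          simp only [zero_smul, add_zero, smul_eq_zero] at hst
          exact ⟨hst.resolve_right hz, rfl⟩
        have := hsec z y hli
        have h0 : secNA h mul z y = 0 := le_antisymm hle this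
        simpa using hiff.mp h0
    apply hz
    have : mul z = mul 0 := by rw [map_zero]; exact hL
    exact hinj this
end
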